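/- (Correctness of the smallest starting chain / exposure reduction.) Let P = (⟨S_1,…,S_k⟩, R) be a pattern of size k and suppose there is an index c with 1 ≤ c < k such that R_{i,j} = b for all i ≤ c < j ≤ k (the first c states are 'before' all remaining states of P). Let Z = ⟨E_1,…,E_l⟩ be an MSS and let π : {1,…,k} → {1,…,l} be strictly increasing with S_i.F = E_{π(i)}.F and S_i.V = E_{π(i)}.V for all i. Assume: (a) R(E_{π(i)}, E_{π(j)}) = R_{i,j} for all 1 ≤ i < j ≤ c; (b) E_{π(i)}.e < E_{π(c+1)}.s for all i ≤ c; and (c) R(E_{π(i)}, E_{π(j)}) = R_{i,j} for all c+1 ≤ i < j ≤ k. Then π witnesses that Z contains P, i.e., R(E_{π(i)}, E_{π(j)}) = R_{i,j} holds for ALL 1 ≤ i < j ≤ k; in other words, only the temporal relations among the first c+1 states and among the last k−c states need to be checked. -/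
import Mathlib


/-- The two Allen-style temporal relations used: `b` = before, `c` = co-occurs. -/
inductive TRel : Type
  | b : TRel
  | c : TRel
deriving DecidableEq

/-- A state: a variable label together with an abstraction value. -/
structure TState (Ab Lab : Type*) where
  F : Lab
  V : Ab

/-- A state interval: a state together with start and end times `s ≤ e`. -/
structure StateInterval (Ab Lab : Type*) where
  F : Lab
  V : Ab
  s : ℝ
  e : ℝ
  hse : s ≤ e

/-- A multivariate state sequence: a finite sequence of state intervals with
nondecreasing start times. -/
structure MSS (Ab Lab : Type*) where
  l : ℕ
  E : Fin l → StateInterval Ab Lab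
  mono : ∀ i j : Fin l, i ≤ j → (E i).s ≤ (E j).s

/-- The temporal relation between two state intervals (the earlier one first):
`b` if the first ends strictly before the second starts, `c` otherwise. -/
noncomputable def irel {Ab Lab : Type*} (Ei Ej : StateInterval Ab Lab) : TRel :=
  if Ei.e < Ej.s then TRel.b else TRel.c

/-- A temporal pattern of size `k`: a sequence of `k` states together with a map
assigning a temporal relation to each pair of indices (only `i < j` is relevant). -/
structure Pattern (Ab Lab : Type*) where
  k : ℕ
  S : Fin k → TState Ab Lab
  R : Fin k → Fin k → TRel

/-- `Z` contains `P`: there is a strictly increasing map matching the states of `P`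
to state intervals of `Z` realizing the prescribed temporal relations. -/
def Contains {Ab Lab : Type*} (Z : MSS Ab Lab) (P : Pattern Ab Lab) : Prop :=
  ∃ π : Fin P.k → Fin Z.l, StrictMono π ∧
    (∀ i, (P.S i).F = (Z.E (π i)).F ∧ (P.S i).V = (Z.E (π i)).V) ∧
    (∀ i j : Fin P.k, i < j → irel (Z.E (π i)) (Z.E (π j)) = P.R i j)

/-- `Q` is a subpattern of `P`: there is a strictly increasing index map preserving
states and the relations between pairs of indices. -/
def Subpattern {Ab Lab : Type*} (Q P : Pattern Ab Lab) : Prop :=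
  ∃ σ : Fin Q.k → Fin P.k, StrictMono σ ∧
    (∀ i, Q.S i = P.S (σ i)) ∧
    (∀ i j : Fin Q.k, i < j → Q.R i j = P.R (σ i) (σ j))

/-- Correctness of the smallest starting chain: if the first c states of P are before
all remaining states, and π matches the states of P with (a) the relations among the
first c states, (b) all first c intervals ending before the (c+1)-st starts, and
(c) the relations among the last k − c states, then π realizes ALL relations of P. -/
theorem smallest_starting_chain {Ab Lab : Type*} (P : Pattern Ab Lab) (Z : MSS Ab Lab)
    (c : ℕ) (hc1 : 1 ≤ c) (hck : c < P.k)
    (hchain : ∀ i j : Fin P.k, (i : ℕ) < c → c ≤ (j : ℕ) → P.R i j = TRel.b)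
    (π : Fin P.k → Fin Z.l) (hmono : StrictMono π)
    (hS : ∀ i, (P.S i).F = (Z.E (π i)).F ∧ (P.S i).V = (Z.E (π i)).V)
    (ha : ∀ i j : Fin P.k, i < j → (j : ℕ) < c →
      irel (Z.E (π i)) (Z.E (π j)) = P.R i j)
    (hb : ∀ i : Fin P.k, (i : ℕ) < c →
      (Z.E (π i)).e < (Z.E (π ⟨c, hck⟩)).s)
    (hcend : ∀ i j : Fin P.k, c ≤ (i : ℕ) → i < j →
      irel (Z.E (π i)) (Z.E (π j)) = P.R i j) :
    ∀ i j : Fin P.k, i < j → irel (Z.E (π i)) (Z.E (π j)) = P.R i j := by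
  intro i j hij
  rcases lt_or_ge (j : ℕ) c with hjc | hcj
  · exact ha i j hij hjc
  · rcases le_or_gt c (i : ℕ) with hci | hic
    · exact hcend i j hci hij
    · rw [hchain i j hic hcj]
      have h1 : (Z.E (π i)).e < (Z.E (π ⟨c, hck⟩)).s := hb i hic
      have h2 : (Z.E (π ⟨c, hck⟩)).s ≤ (Z.E (π j)).s :=
        Z.mono _ _ (hmono.monotone (by exact hcj))
      simp [irel, lt_of_lt_of_le h1 h2]
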